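/- For every admissible u, the functional φ1 can be rewritten in center-of-mass coordinates for the triple (p1,p2,k1) as φ1(u) = (m/(1+m)) Re ∫_{ℝ¹²} conj(u((1+m)P/(2+m) − q2, P/(2+m) + q2, k)) u((1+m)P/(2+m) − q1, P/(2+m) + q1, k) / ( |q1|² + |q2|² + (2/(1+m)) q1·q2 + (m/((1+m)(2+m)))|P|² + (1/(1+m))|k|² + (m/(1+m))μ ) dP dq1 dq2 dk. -/

import Mathlib

open MeasureTheory Real
open scoped RealInnerProductSpace

noncomputable section

abbrev V3 : Type := EuclideanSpace ℝ (Fin 3)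

def h0 (m : ℝ) (p1 p2 k1 k2 : V3) : ℝ :=
  ‖p1‖ ^ 2 + ‖p2‖ ^ 2 + (1 / m) * (‖k1‖ ^ 2 + ‖k2‖ ^ 2)

def phi1Integrand (m μ : ℝ) (u : V3 → V3 → V3 → ℂ) (x : V3 × V3 × V3 × V3) : ℂ :=
  (starRingEnd ℂ) (u (x.1 + x.2.2.1) x.2.1 x.2.2.2) * u (x.2.1 + x.2.2.1) x.1 x.2.2.2 /
    ((h0 m x.1 x.2.1 x.2.2.1 x.2.2.2 + μ : ℝ) : ℂ)

def phi1 (m μ : ℝ) (u : V3 → V3 → V3 → ℂ) : ℝ :=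
  (∫ x : V3 × V3 × V3 × V3, phi1Integrand m μ u x).re

def comEquiv (m : ℝ) (hm2 : (2:ℝ) + m ≠ 0) : (V3 × V3 × V3 × V3) ≃ₜ (V3 × V3 × V3 × V3) where
  toFun x := (((2+m)⁻¹) • x.1 + x.2.1, ((2+m)⁻¹) • x.1 + x.2.2.1,
    (m * (2+m)⁻¹) • x.1 - x.2.1 - x.2.2.1, x.2.2.2)
  invFun y := (y.1 + y.2.1 + y.2.2.1,
    y.1 - ((2+m)⁻¹) • (y.1 + y.2.1 + y.2.2.1),
    y.2.1 - ((2+m)⁻¹) • (y.1 + y.2.1 + y.2.2.1), y.2.2.2)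
  left_inv x := by
    obtain ⟨P, q1, q2, k⟩ := x
    simp only [Prod.mk.injEq]
    refine ⟨?_, ?_, ?_, trivial⟩ <;> (match_scalars <;> field_simp <;> ring)
  right_inv y := by
    obtain ⟨p1, p2, k1, k⟩ := y
    simp only [Prod.mk.injEq]
    refine ⟨?_, ?_, ?_, trivial⟩ <;> (match_scalars <;> field_simp <;> ring)
  continuous_toFun := by fun_prop
  continuous_invFun := by fun_prop


-- volume on products equals prod measure
example : (volume : Measure (V3 × V3 × V3 × V3)) = (volume : Measure V3).prod volume :=
  Measure.volume_eq_prod _ _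

instance : BorelSpace (V3 × V3 × V3 × V3) := Prod.borelSpace

instance : SFinite (volume : Measure (V3 × V3)) := by
  rw [Measure.volume_eq_prod]; infer_instance

instance : SFinite (volume : Measure (V3 × V3 × V3)) := by
  rw [Measure.volume_eq_prod]; infer_instance

instance : SFinite (volume : Measure (V3 × V3 × V3 × V3)) := by
  rw [Measure.volume_eq_prod]; infer_instance

lemma mp_A (c : ℝ) : MeasurePreserving
    (fun x : V3 × V3 × V3 × V3 => (x.1, c • x.1 + x.2.1, c • x.1 + x.2.2.1, x.2.2.2))
    volume volume := by
  have h : ∀ P : V3, Measure.map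
      (fun y : V3 × V3 × V3 => (c • P + y.1, c • P + y.2.1, y.2.2)) volume = volume := by
    intro P
    have : MeasurePreserving (fun y : V3 × V3 × V3 => (c • P + y.1, c • P + y.2.1, y.2.2))
        volume volume := by
      rw [Measure.volume_eq_prod, Measure.volume_eq_prod]
      exact (measurePreserving_add_left volume (c • P)).prod
        ((measurePreserving_add_left volume (c • P)).prod (MeasurePreserving.id volume))
    exact this.map_eq
  rw [Measure.volume_eq_prod]
  exact (MeasurePreserving.id volume).skew_product (by fun_prop) (Filter.Eventually.of_forall h)

lemma mp_B : MeasurePreserving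
    (fun x : V3 × V3 × V3 × V3 => (x.1 - x.2.1 - x.2.2.1, x.2)) volume volume := by
  have hB' : MeasurePreserving
      (fun z : (V3 × V3 × V3) × V3 => (z.1, z.2 - z.1.1 - z.1.2.1))
      ((volume : Measure (V3 × V3 × V3)).prod volume)
      ((volume : Measure (V3 × V3 × V3)).prod volume) := by
    refine (MeasurePreserving.id volume).skew_product
      (g := fun (y : V3 × V3 × V3) (P : V3) => P - y.1 - y.2.1) (by fun_prop)
      (Filter.Eventually.of_forall fun y => ?_)
    have : MeasurePreserving (fun P : V3 => P - y.1 - y.2.1) volume volume := by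
      have : (fun P : V3 => P - y.1 - y.2.1) = fun P : V3 => P + (-y.1 - y.2.1) := by
        funext P; abel
      rw [this]
      exact measurePreserving_add_right volume _
    exact this.map_eq
  have hsw1 : MeasurePreserving (Prod.swap : (V3 × V3 × V3 × V3) → ((V3 × V3 × V3) × V3))
      volume ((volume : Measure (V3 × V3 × V3)).prod volume) := by
    rw [Measure.volume_eq_prod]; exact Measure.measurePreserving_swap
  have hsw2 : MeasurePreserving (Prod.swap : ((V3 × V3 × V3) × V3) → (V3 × V3 × V3 × V3))
      ((volume : Measure (V3 × V3 × V3)).prod volume) volume := by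
    rw [Measure.volume_eq_prod]; exact Measure.measurePreserving_swap
  exact (hsw2.comp (hB'.comp hsw1) : _)

lemma mp_C : MeasurePreserving
    (fun x : V3 × V3 × V3 × V3 => (x.2.1, x.2.2.1, x.1, x.2.2.2)) volume volume := by
  have hsw : MeasurePreserving (Prod.swap : (V3 × V3 × V3 × V3) → ((V3 × V3 × V3) × V3))
      volume ((volume : Measure (V3 × V3 × V3)).prod volume) := by
    rw [Measure.volume_eq_prod]; exact Measure.measurePreserving_swap
  have hassoc : MeasurePreserving
      (MeasurableEquiv.prodAssoc : ((V3 × (V3 × V3)) × V3) ≃ᵐ (V3 × ((V3 × V3) × V3)))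
      ((volume : Measure (V3 × V3 × V3)).prod volume)
      ((volume : Measure V3).prod ((volume : Measure (V3 × V3)).prod volume)) := by
    have := measurePreserving_prodAssoc (volume : Measure V3)
      (volume : Measure (V3 × V3)) (volume : Measure V3)
    rw [Measure.volume_eq_prod]
    exact this
  have hinner : MeasurePreserving
      (fun z : (V3 × V3) × V3 => (z.1.1, z.2, z.1.2))
      ((volume : Measure (V3 × V3)).prod volume) (volume : Measure (V3 × V3 × V3)) := by
    have h1 : MeasurePreserving
        (MeasurableEquiv.prodAssoc : ((V3 × V3) × V3) ≃ᵐ (V3 × (V3 × V3)))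
        ((volume : Measure (V3 × V3)).prod volume)
        ((volume : Measure V3).prod ((volume : Measure V3).prod volume)) := by
      have := measurePreserving_prodAssoc (volume : Measure V3)
        (volume : Measure V3) (volume : Measure V3)
      rw [Measure.volume_eq_prod]
      exact this
    have h2 : MeasurePreserving (Prod.map (id : V3 → V3) (Prod.swap : V3 × V3 → V3 × V3))
        ((volume : Measure V3).prod ((volume : Measure V3).prod volume))
        ((volume : Measure V3).prod ((volume : Measure V3).prod volume)) :=
      (MeasurePreserving.id volume).prod (Measure.measurePreserving_swap)
    have := h2.comp h1
    rw [Measure.volume_eq_prod, Measure.volume_eq_prod]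
    exact this
  have hlast : MeasurePreserving (Prod.map (id : V3 → V3)
      (fun z : (V3 × V3) × V3 => (z.1.1, z.2, z.1.2)))
      ((volume : Measure V3).prod ((volume : Measure (V3 × V3)).prod volume))
      ((volume : Measure V3).prod (volume : Measure (V3 × V3 × V3))) :=
    (MeasurePreserving.id volume).prod hinner
  have hmain := hlast.comp (hassoc.comp hsw)
  have : MeasurePreserving
      (fun x : V3 × V3 × V3 × V3 => (x.2.1, x.2.2.1, x.1, x.2.2.2))
      volume ((volume : Measure V3).prod volume) := by
    convert hmain using 1
    funext x; rfl
  rw [Measure.volume_eq_prod] at this ⊢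
  exact this

lemma mp_T (m : ℝ) (hm2 : (2:ℝ) + m ≠ 0) :
    MeasurePreserving (⇑(comEquiv m hm2)) volume volume := by
  have h := mp_C.comp ((mp_B).comp (mp_A ((2+m)⁻¹)))
  have heq : (⇑(comEquiv m hm2)) =
      ((fun x : V3 × V3 × V3 × V3 => (x.2.1, x.2.2.1, x.1, x.2.2.2)) ∘
        ((fun x : V3 × V3 × V3 × V3 => (x.1 - x.2.1 - x.2.2.1, x.2)) ∘
          (fun x : V3 × V3 × V3 × V3 =>
            (x.1, (2+m)⁻¹ • x.1 + x.2.1, (2+m)⁻¹ • x.1 + x.2.2.1, x.2.2.2)))) := by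
    funext x
    obtain ⟨P, q1, q2, k⟩ := x
    simp only [Function.comp_apply, comEquiv, Homeomorph.homeomorph_mk_coe, Equiv.coe_fn_mk,
      Prod.mk.injEq]
    refine ⟨trivial, trivial, ?_, trivial⟩
    match_scalars <;> field_simp <;> ring
  rw [heq]
  exact h

lemma denom_eq (m μ : ℝ) (hm : 0 < m) (hm1 : (1:ℝ) + m ≠ 0) (hm2 : (2:ℝ) + m ≠ 0)
    (P q1 q2 k : V3) :
    h0 m ((2+m)⁻¹ • P + q1) ((2+m)⁻¹ • P + q2) ((m * (2+m)⁻¹) • P - q1 - q2) k + μ =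
      ((1 + m) / m) *
        (‖q1‖ ^ 2 + ‖q2‖ ^ 2 + (2 / (1 + m)) * ⟪q1, q2⟫ +
          (m / ((1 + m) * (2 + m))) * ‖P‖ ^ 2 + (1 / (1 + m)) * ‖k‖ ^ 2 +
          (m / (1 + m)) * μ) := by
  have hPP := real_inner_self_eq_norm_sq P
  have hq1 := real_inner_self_eq_norm_sq q1
  have hq2 := real_inner_self_eq_norm_sq q2
  have hkk := real_inner_self_eq_norm_sq k
  have e1 : ‖(2+m)⁻¹ • P + q1‖ ^ 2 = ⟪(2+m)⁻¹ • P + q1, (2+m)⁻¹ • P + q1⟫ :=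
    (real_inner_self_eq_norm_sq _).symm
  have e2 : ‖(2+m)⁻¹ • P + q2‖ ^ 2 = ⟪(2+m)⁻¹ • P + q2, (2+m)⁻¹ • P + q2⟫ :=
    (real_inner_self_eq_norm_sq _).symm
  have e3 : ‖(m * (2+m)⁻¹) • P - q1 - q2‖ ^ 2 =
      ⟪(m * (2+m)⁻¹) • P - q1 - q2, (m * (2+m)⁻¹) • P - q1 - q2⟫ :=
    (real_inner_self_eq_norm_sq _).symm
  rw [h0, e1, e2, e3]
  simp only [inner_add_left, inner_add_right, inner_sub_left, inner_sub_right,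
    real_inner_smul_left, real_inner_smul_right]
  rw [real_inner_comm q1 P, real_inner_comm q2 P, real_inner_comm q2 q1]
  rw [← hPP, ← hq1, ← hq2, ← hkk]
  field_simp
  ring

/-- rewriting `φ1` in center-of-mass coordinates of the triple `(p1,p2,k1)`.
The integration variables are `(P, q1, q2, k)`. -/
theorem phi1_center_of_mass (m μ : ℝ) (hm : 0 < m) (hμ : 0 < μ)
    (u : V3 → V3 → V3 → ℂ)
    (huL2 : MemLp (fun x : V3 × V3 × V3 => u x.1 x.2.1 x.2.2) 2 volume)
    (huInt : Integrable (phi1Integrand m μ u)) :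
    phi1 m μ u =
      m / (1 + m) *
        (∫ x : V3 × V3 × V3 × V3,
          (starRingEnd ℂ)
              (u (((1 + m) / (2 + m)) • x.1 - x.2.2.1) ((1 / (2 + m)) • x.1 + x.2.2.1)
                x.2.2.2) *
            u (((1 + m) / (2 + m)) • x.1 - x.2.1) ((1 / (2 + m)) • x.1 + x.2.1) x.2.2.2 /
            ((‖x.2.1‖ ^ 2 + ‖x.2.2.1‖ ^ 2 + (2 / (1 + m)) * ⟪x.2.1, x.2.2.1⟫ +
                (m / ((1 + m) * (2 + m))) * ‖x.1‖ ^ 2 + (1 / (1 + m)) * ‖x.2.2.2‖ ^ 2 +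
                (m / (1 + m)) * μ : ℝ) : ℂ)).re := by
  have hm1 : (1:ℝ) + m ≠ 0 := by positivity
  have hm2 : (2:ℝ) + m ≠ 0 := by positivity
  set T := comEquiv m hm2 with hT
  -- the integrand on the right-hand side
  set g : V3 × V3 × V3 × V3 → ℂ := fun x =>
    (starRingEnd ℂ)
        (u (((1 + m) / (2 + m)) • x.1 - x.2.2.1) ((1 / (2 + m)) • x.1 + x.2.2.1) x.2.2.2) *
      u (((1 + m) / (2 + m)) • x.1 - x.2.1) ((1 / (2 + m)) • x.1 + x.2.1) x.2.2.2 /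
      ((‖x.2.1‖ ^ 2 + ‖x.2.2.1‖ ^ 2 + (2 / (1 + m)) * ⟪x.2.1, x.2.2.1⟫ +
          (m / ((1 + m) * (2 + m))) * ‖x.1‖ ^ 2 + (1 / (1 + m)) * ‖x.2.2.2‖ ^ 2 +
          (m / (1 + m)) * μ : ℝ) : ℂ) with hg
  have hcomp : ∫ x, phi1Integrand m μ u (T x) = ∫ x, phi1Integrand m μ u x :=
    (mp_T m hm2).integral_comp T.toMeasurableEquiv.measurableEmbedding _
  have hpt : ∀ x, phi1Integrand m μ u (T x) = (m / (1 + m)) • g x := by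
    rintro ⟨P, q1, q2, k⟩
    have hTx : T (P, q1, q2, k) = ((2+m)⁻¹ • P + q1, (2+m)⁻¹ • P + q2,
        (m * (2+m)⁻¹) • P - q1 - q2, k) := rfl
    rw [hTx]
    have harg1 : ((2+m)⁻¹ • P + q1) + ((m * (2+m)⁻¹) • P - q1 - q2) =
        ((1 + m) / (2 + m)) • P - q2 := by
      match_scalars <;> field_simp <;> ring
    have harg2 : ((2+m)⁻¹ • P + q2) + ((m * (2+m)⁻¹) • P - q1 - q2) =
        ((1 + m) / (2 + m)) • P - q1 := by
      match_scalars <;> field_simp <;> ring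
    have harg3 : (2+m)⁻¹ • P + q1 = (1 / (2 + m)) • P + q1 := by rw [one_div]
    have harg4 : (2+m)⁻¹ • P + q2 = (1 / (2 + m)) • P + q2 := by rw [one_div]
    simp only [phi1Integrand, hg]
    rw [harg1, harg2]
    rw [denom_eq m μ hm hm1 hm2 P q1 q2 k]
    rw [harg3, harg4]
    set D : ℝ := ‖q1‖ ^ 2 + ‖q2‖ ^ 2 + (2 / (1 + m)) * ⟪q1, q2⟫ +
        (m / ((1 + m) * (2 + m))) * ‖P‖ ^ 2 + (1 / (1 + m)) * ‖k‖ ^ 2 +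
        (m / (1 + m)) * μ with hD
    set N : ℂ := (starRingEnd ℂ) (u (((1 + m) / (2 + m)) • P - q2) ((1 / (2 + m)) • P + q2) k) *
      u (((1 + m) / (2 + m)) • P - q1) ((1 / (2 + m)) • P + q1) k with hN
    have hc : (((1 + m) / m : ℝ) : ℂ) ≠ 0 := by
      simp only [ne_eq, Complex.ofReal_eq_zero]
      positivity
    rw [Complex.ofReal_mul, Complex.real_smul]
    have hcc : ((m / (1 + m) : ℝ) : ℂ) * (((1 + m) / m : ℝ) : ℂ) = 1 := by
      rw [← Complex.ofReal_mul, ← Complex.ofReal_one]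
      congr 1
      field_simp
    calc N / ((((1 + m) / m : ℝ) : ℂ) * (D : ℂ))
        = (((m / (1 + m) : ℝ) : ℂ) * (((1 + m) / m : ℝ) : ℂ)) *
            (N / ((((1 + m) / m : ℝ) : ℂ) * (D : ℂ))) := by rw [hcc, one_mul]
      _ = ((m / (1 + m) : ℝ) : ℂ) *
            ((((1 + m) / m : ℝ) : ℂ) * N / ((((1 + m) / m : ℝ) : ℂ) * (D : ℂ))) := by
          ring
      _ = ((m / (1 + m) : ℝ) : ℂ) * (N / (D : ℂ)) := by rw [mul_div_mul_left _ _ hc]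
  calc phi1 m μ u = (∫ x, phi1Integrand m μ u (T x)).re := by rw [hcomp]; rfl
    _ = (∫ x, (m / (1 + m) : ℝ) • g x).re := by
        congr 1
        exact integral_congr_ae (Filter.Eventually.of_forall hpt)
    _ = ((m / (1 + m) : ℝ) • ∫ x, g x).re := by rw [integral_smul]
    _ = m / (1 + m) * (∫ x, g x).re := by
        rw [Complex.smul_re]
        rfl

end
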